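/- Let n ≥ 3, H = H(G_n) ⊆ ℤ^{2n}, and let C_1,…,C_{s_1} be the induced cycles of G_n with cycle vectors v_1,…,v_{s_1} ∈ ℤ^{n²−1} (where the edges of G_n are e_1,…,e_{n²−1}). Let a ∈ ℤH be such that the set of edges {e_j ∈ E(G_n) : a + h_j ∉ H} contains no cycle of G_n. Then the K-linear span of the column vectors w_j = (v_1(j),…,v_{s_1}(j)) ∈ K^{s_1} over those j with a + h_j ∈ H has dimension equal to the dimension of the K-linear span KL of all cycle vectors of G_n, namely n² − 2n. -/

import Mathlib

open Finset
open Matrix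

/-- The vector `h_e = δ_i + δ_j ∈ ℤ^m` associated with an edge `e = {i,j}`. -/
noncomputable def edgeVec {m : ℕ} (s : Sym2 (Fin m)) : Fin m → ℤ :=
  Sym2.lift ⟨fun i j => Pi.single i 1 + Pi.single j 1, fun _ _ => add_comm _ _⟩ s

/-- The cycle vector `v(C) ∈ ℤ^n` of a closed walk `C`, with respect to an enumeration
`e : Fin n → Sym2 (Fin m)` of the edges of the graph: the alternating sum
`∑_t (-1)^t ε_{k_t}` where `e_{k_t}` is the `t`-th edge of `C`. -/
def cycVec {m n : ℕ} (e : Fin n → Sym2 (Fin m)) {G : SimpleGraph (Fin m)} {x : Fin m}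
    (C : G.Walk x x) : Fin n → ℤ :=
  fun j => ∑ t ∈ Finset.range C.edges.length,
    if C.edges[t]? = some (e j) then (-1 : ℤ) ^ t else 0

/-- `h(v(C)) = ∑_{j ∈ V(C)} δ_j ∈ ℤ^m` for a closed walk `C`. -/
noncomputable def suppVec {m : ℕ} {G : SimpleGraph (Fin m)} {x : Fin m}
    (C : G.Walk x x) : Fin m → ℤ :=
  ∑ u ∈ C.support.toFinset, Pi.single u 1

/-- A cycle is induced (chordless) if every edge of `G` joining two of its vertices is one
of its edges. -/
def Chordless {m : ℕ} (G : SimpleGraph (Fin m)) {x : Fin m} (C : G.Walk x x) : Prop :=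
  ∀ u w : Fin m, G.Adj u w → u ∈ C.support → w ∈ C.support → s(u, w) ∈ C.edges


/-- The graph `G_n`: the complete bipartite graph on the odd and even numbers of `[2n]` with
the edge `{1, 2n}` removed.  Vertices `1,…,2n` are modelled by `Fin (2*n)` via `i ↦ i+1`. -/
def Gn (n : ℕ) : SimpleGraph (Fin (2*n)) where
  Adj i j := (i.val + j.val) % 2 = 1 ∧ ¬(i.val = 0 ∧ j.val = 2*n-1) ∧
    ¬(j.val = 0 ∧ i.val = 2*n-1)
  symm := by
    constructor
    intro i j hij
    obtain ⟨h1, h2, h3⟩ := hij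
    exact ⟨by omega, h3, h2⟩
  loopless := by
    constructor
    intro i hi
    obtain ⟨h1, -, -⟩ := hi
    omega

/-- alternating vector of a list of edges -/
def avec {m N : ℕ} (e : Fin N → Sym2 (Fin m)) (l : List (Sym2 (Fin m))) (j : Fin N) : ℤ :=
  ∑ t ∈ Finset.range l.length, if l[t]? = some (e j) then (-1 : ℤ) ^ t else 0

lemma cycVec_eq_avec {m n : ℕ} (e : Fin n → Sym2 (Fin m)) {G : SimpleGraph (Fin m)} {x : Fin m}
    (C : G.Walk x x) : cycVec e C = avec e C.edges := rfl

lemma avec_nil {m N : ℕ} (e : Fin N → Sym2 (Fin m)) (j : Fin N) : avec e [] j = 0 := by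
  simp [avec]

lemma avec_cons {m N : ℕ} (e : Fin N → Sym2 (Fin m)) (s : Sym2 (Fin m))
    (l : List (Sym2 (Fin m))) (j : Fin N) :
    avec e (s :: l) j = (if s = e j then 1 else 0) - avec e l j := by
  unfold avec
  rw [List.length_cons, Finset.sum_range_succ']
  simp only [List.getElem?_cons_succ, List.getElem?_cons_zero, Option.some_inj, pow_zero]
  have hh : ∀ t, (if l[t]? = some (e j) then (-1:ℤ)^(t+1) else 0)
      = -(if l[t]? = some (e j) then (-1:ℤ)^t else 0) := by
    intro t; split <;> ring
  rw [Finset.sum_congr rfl fun t _ => hh t, Finset.sum_neg_distrib]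
  ring

lemma edgeVec_mk {m : ℕ} (i j : Fin m) :
    edgeVec s(i, j) = Pi.single i 1 + Pi.single j 1 := rfl

lemma edgeVec_apply {m : ℕ} (s : Sym2 (Fin m)) (hs : ¬ s.IsDiag) (x : Fin m) :
    edgeVec s x = if x ∈ s then 1 else 0 := by
  induction s using Sym2.ind with
  | _ i j =>
    rw [Sym2.mk_isDiag_iff] at hs
    rw [edgeVec_mk]
    simp only [Pi.add_apply, Sym2.mem_iff]
    rcases eq_or_ne x i with rfl | hi <;> rcases eq_or_ne x j with rfl | hj <;>
      simp_all [Pi.single_apply]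

/-- telescoping sum for walks -/
lemma telescope {m N : ℕ} (e : Fin N → Sym2 (Fin m)) (heinj : Function.Injective e)
    {G : SimpleGraph (Fin m)} (hcov : ∀ s ∈ G.edgeSet, s ∈ Set.range e)
    {x y : Fin m} (p : G.Walk x y) :
    ∑ j, avec e p.edges j • edgeVec (e j)
      = Pi.single x 1 - (-1 : ℤ) ^ p.length • Pi.single y 1 := by
  induction p with
  | nil => simp [avec_nil]
  | @cons x z y h q ih =>
    rw [SimpleGraph.Walk.edges_cons]
    simp only [avec_cons, sub_smul, Finset.sum_sub_distrib, ih]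
    have hmem : s(x, z) ∈ Set.range e := hcov _ (SimpleGraph.Walk.adj_of_mem_edges
      (SimpleGraph.Walk.cons h q) (by simp))
    obtain ⟨j₀, hj₀⟩ := hmem
    have hiff : ∀ j : Fin N, (if s(x, z) = e j then (1:ℤ) else 0) • edgeVec (e j)
        = if j = j₀ then edgeVec (e j) else 0 := by
      intro j
      have : s(x, z) = e j ↔ j = j₀ := by
        constructor
        · intro hh; exact heinj (by rw [← hh, hj₀])
        · rintro rfl; exact hj₀.symm
      rw [if_congr this rfl rfl]
      split <;> simp
    rw [Finset.sum_congr rfl (fun j _ => hiff j)]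
    rw [Finset.sum_ite_eq' Finset.univ j₀]
    simp only [Finset.mem_univ, if_true, hj₀]
    rw [show s(x,z) = s(z,x) from Sym2.eq_swap, edgeVec_mk]
    rw [SimpleGraph.Walk.length_cons, pow_succ]
    have : ((-1:ℤ) ^ q.length * -1) • (Pi.single y 1 : Fin m → ℤ)
        = -((-1:ℤ) ^ q.length • Pi.single y 1) := by
      rw [mul_neg_one, neg_smul]
    rw [this]
    abel

lemma gn_walk_parity {n : ℕ} {x y : Fin (2*n)} (p : (Gn n).Walk x y) :
    (p.length + x.val + y.val) % 2 = 0 := by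
  induction p with
  | nil => simp; omega
  | @cons x z y h q ih =>
    have h1 : (x.val + z.val) % 2 = 1 := h.1
    rw [SimpleGraph.Walk.length_cons]
    omega

section Main

variable (K : Type*) [Field K] {n : ℕ}

/-- the incidence-type matrix -/
noncomputable def AM (e : Fin (n^2-1) → Sym2 (Fin (2*n))) : Matrix (Fin (2*n)) (Fin (n^2-1)) K :=
  Matrix.of fun i j => ((edgeVec (e j) i : ℤ) : K)

/-- coerced edge vector -/
noncomputable def EK (s : Sym2 (Fin (2*n))) : Fin (2*n) → K := fun i => ((edgeVec s i : ℤ) : K)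

lemma EK_mk (p q : Fin (2*n)) :
    EK K s(p, q) = Pi.single p (1:K) + Pi.single q (1:K) := by
  funext i
  simp only [EK, edgeVec_mk, Pi.add_apply, Pi.single_apply]
  push_cast
  simp [Pi.single_apply]

lemma phi_closed (e : Fin (n^2-1) → Sym2 (Fin (2*n))) (heinj : Function.Injective e)
    (herange : ∀ s, s ∈ (Gn n).edgeSet ↔ s ∈ Set.range e)
    {x : Fin (2*n)} (C : (Gn n).Walk x x) :
    (AM K e).mulVecLin (fun j => ((avec e C.edges j : ℤ) : K)) = 0 := by
  have hpar : (C.length + x.val + x.val) % 2 = 0 := gn_walk_parity C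
  have hpow : ((-1 : ℤ) ^ C.length) = 1 := by
    rcases Nat.even_or_odd C.length with he | ho
    · exact he.neg_one_pow
    · exfalso; rw [Nat.odd_iff] at ho; omega
  have hZ : ∑ j, avec e C.edges j • edgeVec (e j) = 0 := by
    rw [telescope e heinj (fun s hs => (herange s).mp hs), hpow, one_smul, sub_self]
  funext i
  have hi := congrFun hZ i
  simp only [Finset.sum_apply, Pi.smul_apply, smul_eq_mul, Pi.zero_apply] at hi
  simp only [Matrix.mulVecLin_apply, Matrix.mulVec, dotProduct, AM, Matrix.of_apply,
    Pi.zero_apply]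
  calc ∑ j, ((edgeVec (e j) i : ℤ) : K) * ((avec e C.edges j : ℤ) : K)
      = ((∑ j, avec e C.edges j * edgeVec (e j) i : ℤ) : K) := by
        push_cast
        exact Finset.sum_congr rfl fun j _ => (mul_comm _ _)
    _ = 0 := by rw [hi]; simp

/-- the functional cutting out the span of the edge vectors -/
def ff : (Fin (2*n) → K) →ₗ[K] K where
  toFun x := ∑ i, (-1:K)^(i.val) * x i
  map_add' x y := by
    simp only [Pi.add_apply, mul_add]
    rw [Finset.sum_add_distrib]
  map_smul' c x := by
    simp only [Pi.smul_apply, smul_eq_mul, RingHom.id_apply]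
    rw [Finset.mul_sum]
    exact Finset.sum_congr rfl fun i _ => by ring

lemma ff_single (p : Fin (2*n)) : ff K (Pi.single p (1:K)) = (-1:K)^(p.val) := by
  have hterm : ∀ i : Fin (2*n), (-1:K)^(i.val) * (Pi.single p (1:K) : Fin (2*n) → K) i
      = if i = p then (-1:K)^(p.val) else 0 := by
    intro i
    rcases eq_or_ne i p with rfl | h
    · simp
    · simp [Pi.single_apply, h]
  simp only [ff, LinearMap.coe_mk, AddHom.coe_mk]
  rw [Finset.sum_congr rfl fun i _ => hterm i, Finset.sum_ite_eq' Finset.univ p]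
  simp

lemma ff_EK (s : Sym2 (Fin (2*n))) (hs : s ∈ (Gn n).edgeSet) : ff K (EK K s) = 0 := by
  induction s using Sym2.ind with
  | _ p q =>
    have hadj : (Gn n).Adj p q := (SimpleGraph.mem_edgeSet (G := Gn n)).mp hs
    have hpar : (p.val + q.val) % 2 = 1 := hadj.1
    rw [EK_mk, map_add, ff_single, ff_single]
    rcases Nat.even_or_odd p.val with he | ho
    · have hq : Odd q.val := by
        rw [Nat.odd_iff]; rw [Nat.even_iff] at he; omega
      rw [he.neg_one_pow, hq.neg_one_pow]; ring
    · have hq : Even q.val := by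
        rw [Nat.even_iff]; rw [Nat.odd_iff] at ho; omega
      rw [ho.neg_one_pow, hq.neg_one_pow]; ring

lemma span_cols_eq (hn : 3 ≤ n) (e : Fin (n^2-1) → Sym2 (Fin (2*n)))
    (herange : ∀ s, s ∈ (Gn n).edgeSet ↔ s ∈ Set.range e) :
    Submodule.span K (Set.range (AM K e)ᵀ) = LinearMap.ker (ff K (n := n)) := by
  have hedge : ∀ s ∈ (Gn n).edgeSet, EK K s ∈ Submodule.span K (Set.range (AM K e)ᵀ) := by
    intro s hs
    obtain ⟨j, rfl⟩ := (herange s).mp hs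
    exact Submodule.subset_span ⟨j, rfl⟩
  apply le_antisymm
  · rw [Submodule.span_le]
    rintro _ ⟨j, rfl⟩
    rw [SetLike.mem_coe, LinearMap.mem_ker]
    exact ff_EK K (e j) ((herange (e j)).mpr ⟨j, rfl⟩)
  · intro x hx
    rw [LinearMap.mem_ker] at hx
    set v0 : Fin (2*n) := ⟨0, by omega⟩ with hv0
    set v1 : Fin (2*n) := ⟨1, by omega⟩ with hv1
    set v2 : Fin (2*n) := ⟨2, by omega⟩ with hv2
    set bse : Fin (2*n) → Fin (2*n) := fun i => if i.val % 2 = 0 then v0 else v1 with hbse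
    have e0 : v0.val = 0 := rfl
    have e1 : v1.val = 1 := rfl
    have e2 : v2.val = 2 := rfl
    have hg : ∀ i : Fin (2*n),
        (Pi.single i (1:K) - Pi.single (bse i) (1:K) : Fin (2*n) → K)
          ∈ Submodule.span K (Set.range (AM K e)ᵀ) := by
      intro i
      by_cases h0 : i.val % 2 = 0
      · rw [hbse]; simp only [if_pos h0]
        by_cases hi0 : i = v0
        · rw [hi0, sub_self]; exact Submodule.zero_mem _
        · have hval : i.val ≠ 0 := fun h => hi0 (Fin.ext (h.trans e0.symm))
          have heq : (Pi.single i (1:K) - Pi.single v0 (1:K) : Fin (2*n) → K)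
              = EK K s(i, v1) - EK K s(v0, v1) := by
            rw [EK_mk, EK_mk]; abel
          rw [heq]
          refine Submodule.sub_mem _ (hedge _ ?_) (hedge _ ?_)
          · rw [SimpleGraph.mem_edgeSet]
            exact ⟨by omega, by omega, by omega⟩
          · rw [SimpleGraph.mem_edgeSet]
            exact ⟨by omega, by omega, by omega⟩
      · rw [hbse]; simp only [if_neg h0]
        by_cases hi1 : i = v1
        · rw [hi1, sub_self]; exact Submodule.zero_mem _
        · have hval : i.val ≠ 1 := fun h => hi1 (Fin.ext (h.trans e1.symm))
          by_cases hlast : i.val = 2*n-1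
          · have heq : (Pi.single i (1:K) - Pi.single v1 (1:K) : Fin (2*n) → K)
                = EK K s(v2, i) - EK K s(v2, v1) := by
              rw [EK_mk, EK_mk]; abel
            rw [heq]
            refine Submodule.sub_mem _ (hedge _ ?_) (hedge _ ?_)
            · rw [SimpleGraph.mem_edgeSet]
              exact ⟨by omega, by omega, by omega⟩
            · rw [SimpleGraph.mem_edgeSet]
              exact ⟨by omega, by omega, by omega⟩
          · have heq : (Pi.single i (1:K) - Pi.single v1 (1:K) : Fin (2*n) → K)
                = EK K s(v0, i) - EK K s(v0, v1) := by
              rw [EK_mk, EK_mk]; abel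
            rw [heq]
            refine Submodule.sub_mem _ (hedge _ ?_) (hedge _ ?_)
            · rw [SimpleGraph.mem_edgeSet]
              exact ⟨by omega, by omega, by omega⟩
            · rw [SimpleGraph.mem_edgeSet]
              exact ⟨by omega, by omega, by omega⟩
    set c0 : K := ∑ i ∈ Finset.univ.filter (fun i : Fin (2*n) => i.val % 2 = 0), x i with hc0
    set c1 : K := ∑ i ∈ Finset.univ.filter (fun i : Fin (2*n) => ¬ i.val % 2 = 0), x i with hc1
    have hsum1 : ∑ i, x i • (Pi.single i (1:K) : Fin (2*n) → K) = x := by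
      funext k
      simp only [Finset.sum_apply, Pi.smul_apply, Pi.single_apply, smul_eq_mul, mul_ite,
        mul_one, mul_zero]
      rw [Finset.sum_ite_eq Finset.univ k x]
      simp
    have hsum2 : ∑ i, x i • (Pi.single (bse i) (1:K) : Fin (2*n) → K)
        = c0 • (Pi.single v0 (1:K) : Fin (2*n) → K)
          + c1 • (Pi.single v1 (1:K) : Fin (2*n) → K) := by
      rw [← Finset.sum_filter_add_sum_filter_not Finset.univ (fun i : Fin (2*n) => i.val % 2 = 0)]
      congr 1
      · rw [Finset.sum_congr rfl (fun i hi => by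
          simp only [Finset.mem_filter] at hi
          simp only [hbse]
          rw [if_pos hi.2] :
          ∀ i ∈ Finset.univ.filter (fun i : Fin (2*n) => i.val % 2 = 0),
            x i • (Pi.single (bse i) (1:K) : Fin (2*n) → K)
              = x i • (Pi.single v0 (1:K) : Fin (2*n) → K))]
        rw [hc0, Finset.sum_smul]
      · rw [Finset.sum_congr rfl (fun i hi => by
          simp only [Finset.mem_filter] at hi
          simp only [hbse]
          rw [if_neg hi.2] :
          ∀ i ∈ Finset.univ.filter (fun i : Fin (2*n) => ¬ i.val % 2 = 0),
            x i • (Pi.single (bse i) (1:K) : Fin (2*n) → K)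
              = x i • (Pi.single v1 (1:K) : Fin (2*n) → K))]
        rw [hc1, Finset.sum_smul]
    have hffx : c0 - c1 = 0 := by
      have : ff K x = ∑ i, (-1:K)^(i.val) * x i := rfl
      rw [hx] at this
      rw [← Finset.sum_filter_add_sum_filter_not Finset.univ
        (fun i : Fin (2*n) => i.val % 2 = 0)] at this
      rw [Finset.sum_congr rfl (fun i hi => by
        simp only [Finset.mem_filter] at hi
        rw [(Nat.even_iff.mpr hi.2).neg_one_pow, one_mul] :
        ∀ i ∈ Finset.univ.filter (fun i : Fin (2*n) => i.val % 2 = 0),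
          (-1:K)^(i.val) * x i = x i)] at this
      rw [Finset.sum_congr rfl (fun i hi => by
        simp only [Finset.mem_filter] at hi
        rw [(Nat.odd_iff.mpr (by omega : i.val % 2 = 1)).neg_one_pow] :
        ∀ i ∈ Finset.univ.filter (fun i : Fin (2*n) => ¬ i.val % 2 = 0),
          (-1:K)^(i.val) * x i = -1 * x i)] at this
      simp only [neg_one_mul] at this
      rw [Finset.sum_neg_distrib] at this
      rw [hc0, hc1, sub_eq_add_neg]
      exact this.symm
    have hcc : c0 = c1 := by
      have := sub_eq_zero.mp hffx; exact this
    have hx2 : x = (∑ i, x i • ((Pi.single i (1:K) : Fin (2*n) → K) - Pi.single (bse i) 1))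
        + c0 • ((Pi.single v0 (1:K) : Fin (2*n) → K) + Pi.single v1 1) := by
      simp only [smul_sub, Finset.sum_sub_distrib, hsum1, hsum2, smul_add]
      rw [← hcc]
      abel
    rw [hx2]
    refine Submodule.add_mem _ (Submodule.sum_mem _ fun i _ => Submodule.smul_mem _ _ (hg i)) ?_
    refine Submodule.smul_mem _ _ ?_
    rw [← EK_mk]
    refine hedge _ ?_
    rw [SimpleGraph.mem_edgeSet]
    exact ⟨by omega, by omega, by omega⟩

lemma finrank_ker_ff (hn : 3 ≤ n) :
    Module.finrank K (LinearMap.ker (ff K (n := n))) = 2*n - 1 := by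
  have hsurj : LinearMap.range (ff K (n := n)) = ⊤ := by
    rw [LinearMap.range_eq_top]
    intro c
    refine ⟨c • (Pi.single (⟨0, by omega⟩ : Fin (2*n)) (1:K) : Fin (2*n) → K), ?_⟩
    rw [_root_.map_smul, ff_single]
    simp
  have h := LinearMap.finrank_range_add_finrank_ker (ff K (n := n))
  rw [hsurj, finrank_top, Module.finrank_self,
    Module.finrank_fintype_fun_eq_card, Fintype.card_fin] at h
  omega

lemma finrank_ker_phi (hn : 3 ≤ n) (e : Fin (n^2-1) → Sym2 (Fin (2*n)))
    (herange : ∀ s, s ∈ (Gn n).edgeSet ↔ s ∈ Set.range e) :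
    Module.finrank K (LinearMap.ker (AM K e).mulVecLin) = n^2 - 2*n := by
  have h1 := LinearMap.finrank_range_add_finrank_ker (AM K e).mulVecLin
  rw [Matrix.range_mulVecLin, show Set.range (AM K e).col = Set.range (AM K e)ᵀ from rfl,
    span_cols_eq K hn e herange, finrank_ker_ff K hn,
    Module.finrank_fintype_fun_eq_card, Fintype.card_fin] at h1
  have h2 : 2*n+1 ≤ n^2 := by nlinarith
  omega


lemma sym2_ne_of {m : ℕ} {a b c d : Fin m}
    (h : ¬((a.val = c.val ∧ b.val = d.val) ∨ (a.val = d.val ∧ b.val = c.val))) :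
    ¬(s(a, b) = s(c, d)) := by
  intro hh
  rcases Sym2.eq_iff.mp hh with ⟨u1, u2⟩ | ⟨u1, u2⟩
  · exact h (Or.inl ⟨congrArg Fin.val u1, congrArg Fin.val u2⟩)
  · exact h (Or.inr ⟨congrArg Fin.val u1, congrArg Fin.val u2⟩)

lemma cycle4 {m : ℕ} {G : SimpleGraph (Fin m)} {p q r t : Fin m}
    (h1 : G.Adj p q) (h2 : G.Adj q r) (h3 : G.Adj r t) (h4 : G.Adj t p)
    (hpr : p ≠ r) (hqt : q ≠ t) :
    (SimpleGraph.Walk.cons h1 (SimpleGraph.Walk.cons h2 (SimpleGraph.Walk.cons h3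
      (SimpleGraph.Walk.cons h4 SimpleGraph.Walk.nil)))).IsCycle := by
  have e1 := h1.ne; have e2 := h2.ne; have e3 := h3.ne; have e4 := h4.ne
  have f1 := e1.symm; have f2 := e2.symm; have f3 := e3.symm; have f4 := e4.symm
  have g1 := hpr.symm; have g2 := hqt.symm
  rw [SimpleGraph.Walk.isCycle_def, SimpleGraph.Walk.isTrail_def]
  refine ⟨?_, by simp, ?_⟩
  · simp only [SimpleGraph.Walk.edges_cons, SimpleGraph.Walk.edges_nil, List.nodup_cons,
      List.mem_cons, List.not_mem_nil, or_false, List.nodup_nil, and_true,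
      List.mem_singleton, Sym2.eq_iff]
    push_neg
    tauto
  · simp only [SimpleGraph.Walk.support_cons, SimpleGraph.Walk.support_nil, List.tail_cons,
      List.nodup_cons, List.mem_cons, List.not_mem_nil, or_false, List.mem_singleton,
      List.nodup_nil, and_true]
    push_neg
    tauto

def va {n : ℕ} (z : Fin (n-1) × Fin (n-1)) : Fin (2*n) :=
  ⟨2*(z.1.val+1), by have := z.1.isLt; omega⟩

def wb {n : ℕ} (z : Fin (n-1) × Fin (n-1)) : Fin (2*n) :=
  ⟨2*(z.2.val+1)+1, by have := z.2.isLt; omega⟩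

lemma fund_cycle {n : ℕ} (hn : 3 ≤ n) (e : Fin (n^2-1) → Sym2 (Fin (2*n)))
    (z : Fin (n-1) × Fin (n-1)) (hz : ¬(z.1.val = 0 ∧ z.2.val = n-2)) :
    ∃ (x : Fin (2*n)) (C : (Gn n).Walk x x), C.IsCycle ∧ Chordless (Gn n) C ∧
      (∀ j, e j = s(va z, wb z) → cycVec e C j = -1) ∧
      (∀ j (z' : Fin (n-1) × Fin (n-1)), ¬(z'.1.val = 0 ∧ z'.2.val = n-2) → z' ≠ z →
        e j = s(va z', wb z') → cycVec e C j = 0) := by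
  have hlt1 : z.1.val < n-1 := z.1.isLt
  have hlt2 : z.2.val < n-1 := z.2.isLt
  have ha : (va z).val = 2*(z.1.val+1) := rfl
  have hbv : (wb z).val = 2*(z.2.val+1)+1 := rfl
  by_cases hb : (wb z).val = 2*n-1
  · -- shape 2 : 1 → a → b → 2 → 1
    have hva4 : 4 ≤ (va z).val := by omega
    obtain ⟨x1, hx1⟩ : ∃ x : Fin (2*n), x.val = 1 := ⟨⟨1, by omega⟩, rfl⟩
    obtain ⟨x2, hx2⟩ : ∃ x : Fin (2*n), x.val = 2 := ⟨⟨2, by omega⟩, rfl⟩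
    have h1 : (Gn n).Adj x1 (va z) := ⟨by omega, by omega, by omega⟩
    have h2 : (Gn n).Adj (va z) (wb z) := ⟨by omega, by omega, by omega⟩
    have h3 : (Gn n).Adj (wb z) x2 := ⟨by omega, by omega, by omega⟩
    have h4 : (Gn n).Adj x2 x1 := ⟨by omega, by omega, by omega⟩
    refine ⟨x1, SimpleGraph.Walk.cons h1 (SimpleGraph.Walk.cons h2 (SimpleGraph.Walk.cons h3
      (SimpleGraph.Walk.cons h4 SimpleGraph.Walk.nil))),
      cycle4 h1 h2 h3 h4 (Fin.ne_of_val_ne (by omega)) (Fin.ne_of_val_ne (by omega)),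
      ?_, ?_, ?_⟩
    · intro u w hadj hu hw
      have hadj1 : (u.val + w.val) % 2 = 1 := hadj.1
      simp only [SimpleGraph.Walk.support_cons, SimpleGraph.Walk.support_nil, List.mem_cons,
        List.not_mem_nil, or_false] at hu hw
      simp only [SimpleGraph.Walk.edges_cons, SimpleGraph.Walk.edges_nil, List.mem_cons,
        List.not_mem_nil, or_false]
      rcases hu with rfl|rfl|rfl|rfl|rfl <;> rcases hw with rfl|rfl|rfl|rfl|rfl <;>
        first
        | (exfalso; omega)
        | exact Or.inl rfl
        | exact Or.inl Sym2.eq_swap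
        | exact Or.inr (Or.inl rfl)
        | exact Or.inr (Or.inl Sym2.eq_swap)
        | exact Or.inr (Or.inr (Or.inl rfl))
        | exact Or.inr (Or.inr (Or.inl Sym2.eq_swap))
        | exact Or.inr (Or.inr (Or.inr rfl))
        | exact Or.inr (Or.inr (Or.inr Sym2.eq_swap))
    · intro j hj
      have c1 : ¬(s(x1, va z) = e j) := by rw [hj]; exact sym2_ne_of (by omega)
      have c2 : s(va z, wb z) = e j := hj.symm
      have c3 : ¬(s(wb z, x2) = e j) := by rw [hj]; exact sym2_ne_of (by omega)
      have c4 : ¬(s(x2, x1) = e j) := by rw [hj]; exact sym2_ne_of (by omega)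
      show avec e [s(x1, va z), s(va z, wb z), s(wb z, x2), s(x2, x1)] j = -1
      rw [avec_cons, avec_cons, avec_cons, avec_cons, avec_nil,
        if_neg c1, if_pos c2, if_neg c3, if_neg c4]
      ring
    · intro j z' hz' hzz hj
      have hzzv : z'.1.val ≠ z.1.val ∨ z'.2.val ≠ z.2.val := by
        by_contra hcc
        push_neg at hcc
        exact hzz (Prod.ext (Fin.ext hcc.1) (Fin.ext hcc.2))
      have ha' : (va z').val = 2*(z'.1.val+1) := rfl
      have hb' : (wb z').val = 2*(z'.2.val+1)+1 := rfl
      have hlt1' : z'.1.val < n-1 := z'.1.isLt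
      have hlt2' : z'.2.val < n-1 := z'.2.isLt
      have c1 : ¬(s(x1, va z) = e j) := by rw [hj]; exact sym2_ne_of (by omega)
      have c2 : ¬(s(va z, wb z) = e j) := by rw [hj]; exact sym2_ne_of (by omega)
      have c3 : ¬(s(wb z, x2) = e j) := by rw [hj]; exact sym2_ne_of (by omega)
      have c4 : ¬(s(x2, x1) = e j) := by rw [hj]; exact sym2_ne_of (by omega)
      show avec e [s(x1, va z), s(va z, wb z), s(wb z, x2), s(x2, x1)] j = 0
      rw [avec_cons, avec_cons, avec_cons, avec_cons, avec_nil,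
        if_neg c1, if_neg c2, if_neg c3, if_neg c4]
      ring
  · -- shape 1 : 0 → b → a → 1 → 0
    obtain ⟨x0, hx0⟩ : ∃ x : Fin (2*n), x.val = 0 := ⟨⟨0, by omega⟩, rfl⟩
    obtain ⟨x1, hx1⟩ : ∃ x : Fin (2*n), x.val = 1 := ⟨⟨1, by omega⟩, rfl⟩
    have h1 : (Gn n).Adj x0 (wb z) := ⟨by omega, by omega, by omega⟩
    have h2 : (Gn n).Adj (wb z) (va z) := ⟨by omega, by omega, by omega⟩
    have h3 : (Gn n).Adj (va z) x1 := ⟨by omega, by omega, by omega⟩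
    have h4 : (Gn n).Adj x1 x0 := ⟨by omega, by omega, by omega⟩
    refine ⟨x0, SimpleGraph.Walk.cons h1 (SimpleGraph.Walk.cons h2 (SimpleGraph.Walk.cons h3
      (SimpleGraph.Walk.cons h4 SimpleGraph.Walk.nil))),
      cycle4 h1 h2 h3 h4 (Fin.ne_of_val_ne (by omega)) (Fin.ne_of_val_ne (by omega)),
      ?_, ?_, ?_⟩
    · intro u w hadj hu hw
      have hadj1 : (u.val + w.val) % 2 = 1 := hadj.1
      simp only [SimpleGraph.Walk.support_cons, SimpleGraph.Walk.support_nil, List.mem_cons,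
        List.not_mem_nil, or_false] at hu hw
      simp only [SimpleGraph.Walk.edges_cons, SimpleGraph.Walk.edges_nil, List.mem_cons,
        List.not_mem_nil, or_false]
      rcases hu with rfl|rfl|rfl|rfl|rfl <;> rcases hw with rfl|rfl|rfl|rfl|rfl <;>
        first
        | (exfalso; omega)
        | exact Or.inl rfl
        | exact Or.inl Sym2.eq_swap
        | exact Or.inr (Or.inl rfl)
        | exact Or.inr (Or.inl Sym2.eq_swap)
        | exact Or.inr (Or.inr (Or.inl rfl))
        | exact Or.inr (Or.inr (Or.inl Sym2.eq_swap))
        | exact Or.inr (Or.inr (Or.inr rfl))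
        | exact Or.inr (Or.inr (Or.inr Sym2.eq_swap))
    · intro j hj
      have c1 : ¬(s(x0, wb z) = e j) := by rw [hj]; exact sym2_ne_of (by omega)
      have c2 : s(wb z, va z) = e j := by rw [hj]; exact Sym2.eq_swap
      have c3 : ¬(s(va z, x1) = e j) := by rw [hj]; exact sym2_ne_of (by omega)
      have c4 : ¬(s(x1, x0) = e j) := by rw [hj]; exact sym2_ne_of (by omega)
      show avec e [s(x0, wb z), s(wb z, va z), s(va z, x1), s(x1, x0)] j = -1
      rw [avec_cons, avec_cons, avec_cons, avec_cons, avec_nil,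
        if_neg c1, if_pos c2, if_neg c3, if_neg c4]
      ring
    · intro j z' hz' hzz hj
      have hzzv : z'.1.val ≠ z.1.val ∨ z'.2.val ≠ z.2.val := by
        by_contra hcc
        push_neg at hcc
        exact hzz (Prod.ext (Fin.ext hcc.1) (Fin.ext hcc.2))
      have ha' : (va z').val = 2*(z'.1.val+1) := rfl
      have hb' : (wb z').val = 2*(z'.2.val+1)+1 := rfl
      have hlt1' : z'.1.val < n-1 := z'.1.isLt
      have hlt2' : z'.2.val < n-1 := z'.2.isLt
      have c1 : ¬(s(x0, wb z) = e j) := by rw [hj]; exact sym2_ne_of (by omega)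
      have c2 : ¬(s(wb z, va z) = e j) := by rw [hj]; exact sym2_ne_of (by omega)
      have c3 : ¬(s(va z, x1) = e j) := by rw [hj]; exact sym2_ne_of (by omega)
      have c4 : ¬(s(x1, x0) = e j) := by rw [hj]; exact sym2_ne_of (by omega)
      show avec e [s(x0, wb z), s(wb z, va z), s(va z, x1), s(x1, x0)] j = 0
      rw [avec_cons, avec_cons, avec_cons, avec_cons, avec_nil,
        if_neg c1, if_neg c2, if_neg c3, if_neg c4]
      ring

lemma sym2_decomp {α : Type*} (s : Sym2 α) : ∃ p q : α, s = s(p, q) := by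
  induction s using Sym2.ind with
  | _ p q => exact ⟨p, q, rfl⟩

lemma exists_cycle_of_mindeg {m : ℕ} {G : SimpleGraph (Fin m)}
    (hdeg : ∀ x y : Fin m, G.Adj x y → ∃ z, z ≠ y ∧ G.Adj x z)
    (hne : ∃ x y : Fin m, G.Adj x y) :
    ∃ (x : Fin m) (c : G.Walk x x), c.IsCycle := by
  by_contra hnc
  push_neg at hnc
  have key : ∀ L : ℕ, ∃ (x y : Fin m) (p : G.Walk x y), p.IsPath ∧ p.length = L + 1 := by
    intro L
    induction L with
    | zero =>
      obtain ⟨x, y, hxy⟩ := hne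
      refine ⟨x, y, SimpleGraph.Walk.cons hxy SimpleGraph.Walk.nil, ?_, rfl⟩
      rw [SimpleGraph.Walk.cons_isPath_iff]
      exact ⟨SimpleGraph.Walk.IsPath.nil, by simp [hxy.ne]⟩
    | succ L ih =>
      obtain ⟨x, y, p, hp, hlen⟩ := ih
      cases p with
      | nil => simp at hlen
      | @cons x w y h q =>
        obtain ⟨zz, hzw, hz⟩ := hdeg x w h
        by_cases hzs : zz ∈ (SimpleGraph.Walk.cons h q).support
        · exfalso
          apply hnc x (SimpleGraph.Walk.cons hz
            (((SimpleGraph.Walk.cons h q).takeUntil zz hzs).reverse))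
          refine (SimpleGraph.Walk.cons_isCycle_iff _ hz).mpr ⟨(hp.takeUntil hzs).reverse, ?_⟩
          rw [SimpleGraph.Walk.edges_reverse, List.mem_reverse]
          intro hmem
          have hmem' : s(x, zz) ∈ (SimpleGraph.Walk.cons h q).edges :=
            SimpleGraph.Walk.edges_takeUntil_subset _ hzs hmem
          rw [SimpleGraph.Walk.edges_cons, List.mem_cons] at hmem'
          rcases hmem' with heq | hmem''
          · rcases Sym2.eq_iff.mp heq with ⟨_, h2⟩ | ⟨h1, _⟩
            · exact hzw h2
            · exact h.ne h1
          · have hx : x ∈ q.support := SimpleGraph.Walk.fst_mem_support_of_mem_edges q hmem''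
            rw [SimpleGraph.Walk.cons_isPath_iff] at hp
            exact hp.2 hx
        · refine ⟨zz, y, SimpleGraph.Walk.cons hz.symm (SimpleGraph.Walk.cons h q), ?_, ?_⟩
          · rw [SimpleGraph.Walk.cons_isPath_iff]
            exact ⟨hp, hzs⟩
          · rw [SimpleGraph.Walk.length_cons, hlen]
  obtain ⟨x, y, p, hp, hlen⟩ := key (Fintype.card (Fin m))
  have hlt := hp.length_lt
  omega

lemma ker_vanish (hn : 3 ≤ n) (e : Fin (n^2-1) → Sym2 (Fin (2*n)))
    (heinj : Function.Injective e)
    (herange : ∀ s, s ∈ (Gn n).edgeSet ↔ s ∈ Set.range e)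
    (S : Set (Fin (n^2-1)))
    (hnc : ∀ (x : Fin (2*n)) (C : (Gn n).Walk x x), C.IsCycle →
      ∃ j, e j ∈ C.edges ∧ j ∈ S)
    (u : Fin (n^2-1) → K) (hker : (AM K e).mulVecLin u = 0)
    (hS : ∀ j ∈ S, u j = 0) : u = 0 := by
  by_contra hu
  have hu0 : ∃ j, u j ≠ 0 := by
    by_contra hall; push_neg at hall; exact hu (funext fun j => hall j)
  set G' : SimpleGraph (Fin (2*n)) :=
    { Adj := fun x y => ∃ j, u j ≠ 0 ∧ e j = s(x, y)
      symm := by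
        constructor
        rintro x y ⟨j, h1, h2⟩
        exact ⟨j, h1, by rw [h2, Sym2.eq_swap]⟩
      loopless := by
        constructor
        rintro x ⟨j, h1, h2⟩
        have hmem := (herange (e j)).mpr ⟨j, rfl⟩
        rw [h2] at hmem
        exact (Gn n).loopless.irrefl x ((SimpleGraph.mem_edgeSet _).mp hmem) } with hG'
  have hle : G' ≤ Gn n := by
    intro x y hxy
    obtain ⟨j, h1, h2⟩ := hxy
    have hmem := (herange (e j)).mpr ⟨j, rfl⟩
    rw [h2] at hmem
    exact (SimpleGraph.mem_edgeSet _).mp hmem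
  have hdeg : ∀ x y : Fin (2*n), G'.Adj x y → ∃ z, z ≠ y ∧ G'.Adj x z := by
    intro x y hxy
    obtain ⟨j₀, hj₀u, hj₀e⟩ := hxy
    have h0 : ∑ j, ((edgeVec (e j) x : ℤ) : K) * u j = 0 := by
      have hx := congrFun hker x
      simpa [Matrix.mulVecLin_apply, Matrix.mulVec, dotProduct, AM] using hx
    have h1 : ∑ j, (if x ∈ e j then u j else 0) = 0 := by
      have hcongr : ∀ j : Fin (n^2-1), (if x ∈ e j then u j else 0)
          = ((edgeVec (e j) x : ℤ) : K) * u j := by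
        intro j
        have hnd : ¬(e j).IsDiag :=
          SimpleGraph.not_isDiag_of_mem_edgeSet _ ((herange (e j)).mpr ⟨j, rfl⟩)
        rw [edgeVec_apply _ hnd x]
        by_cases hxe : x ∈ e j <;> simp [hxe]
      rw [Finset.sum_congr rfl fun j _ => hcongr j]
      exact h0
    have hmem₀ : j₀ ∈ Finset.univ.filter (fun j => x ∈ e j) := by
      simp only [Finset.mem_filter, Finset.mem_univ, true_and, hj₀e]
      exact Sym2.mem_mk_left x y
    have h2 : ∑ j ∈ Finset.univ.filter (fun j => x ∈ e j), u j = 0 := by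
      rw [Finset.sum_filter]; exact h1
    by_contra hcon
    push_neg at hcon
    have hall : ∀ j ∈ Finset.univ.filter (fun j => x ∈ e j), j ≠ j₀ → u j = 0 := by
      intro j hj hne'
      by_contra hne0
      obtain ⟨zc, hzc⟩ := Sym2.mem_iff_exists.mp (Finset.mem_filter.mp hj).2
      have hzy : zc ≠ y := by
        rintro rfl
        exact hne' (heinj (by rw [hzc, hj₀e]))
      exact hcon zc hzy ⟨j, hne0, hzc⟩
    have hsum := Finset.sum_eq_single_of_mem j₀ hmem₀ hall
    rw [h2] at hsum
    exact hj₀u hsum.symm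
  have hne : ∃ x y : Fin (2*n), G'.Adj x y := by
    obtain ⟨j, hj⟩ := hu0
    obtain ⟨p, q, hpq⟩ := sym2_decomp (e j)
    exact ⟨p, q, j, hj, hpq⟩
  obtain ⟨x, c, hc⟩ := exists_cycle_of_mindeg hdeg hne
  have hsub : ∀ s ∈ c.edges, s ∈ (Gn n).edgeSet := by
    intro s hs
    have h1 := c.edges_subset_edgeSet hs
    obtain ⟨p, q, rfl⟩ := sym2_decomp s
    exact (SimpleGraph.mem_edgeSet _).mpr (hle ((SimpleGraph.mem_edgeSet _).mp h1))
  obtain ⟨j, hjmem, hjS⟩ := hnc x (c.transfer (Gn n) hsub) (hc.transfer hsub)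
  rw [SimpleGraph.Walk.edges_transfer] at hjmem
  have h1 := c.edges_subset_edgeSet hjmem
  obtain ⟨p, q, hpq⟩ := sym2_decomp (e j)
  rw [hpq] at h1
  obtain ⟨j', hj'u, hj'e⟩ := (SimpleGraph.mem_edgeSet _).mp h1
  have hjj : j' = j := heinj (by rw [hj'e, hpq])
  exact hj'u (hjj ▸ hS j hjS)

end Main

/-- Let `n ≥ 3`, `H = H(G_n) ⊆ ℤ^{2n}`, let `e` enumerate the `n² - 1` edges
of `G_n` and let `v : Fin s₁ → ℤ^{n²-1}` enumerate the cycle vectors of the induced cycles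
of `G_n` (up to sign).  Let `a ∈ ℤH` be such that the set of edges `e j` with
`a + h_j ∉ H` contains no cycle of `G_n`.  Then the `K`-span of the column vectors
`w_j = (v_1(j),…,v_{s₁}(j))` over those `j` with `a + h_j ∈ H` has dimension equal to the
dimension of the span `KL` of all cycle vectors of `G_n`, namely `n² - 2n`. -/
theorem stmt_17 (K : Type*) [Field K] (n : ℕ) (hn : 3 ≤ n)
    (e : Fin (n^2-1) → Sym2 (Fin (2*n))) (heinj : Function.Injective e)
    (herange : ∀ s, s ∈ (Gn n).edgeSet ↔ s ∈ Set.range e)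
    (H : AddSubmonoid (Fin (2*n) → ℤ))
    (hH : H = AddSubmonoid.closure (Set.range fun j => edgeVec (e j)))
    (s₁ : ℕ) (v : Fin s₁ → (Fin (n^2-1) → ℤ))
    (hv1 : ∀ t, ∃ (x : Fin (2*n)) (C : (Gn n).Walk x x), C.IsCycle ∧ Chordless (Gn n) C ∧
      v t = cycVec e C)
    (hv2 : ∀ (x : Fin (2*n)) (C : (Gn n).Walk x x), C.IsCycle → Chordless (Gn n) C →
      ∃ t, v t = cycVec e C ∨ v t = -(cycVec e C))
    (a : Fin (2*n) → ℤ) (haZ : a ∈ AddSubgroup.closure (H : Set (Fin (2*n) → ℤ)))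
    (hnc : ¬ ∃ (x : Fin (2*n)) (C : (Gn n).Walk x x), C.IsCycle ∧
      ∀ j : Fin (n^2-1), e j ∈ C.edges → a + edgeVec (e j) ∉ H) :
    Module.finrank K (Submodule.span K {y : Fin s₁ → K | ∃ j : Fin (n^2-1),
        a + edgeVec (e j) ∈ H ∧ y = fun t => ((v t j : ℤ) : K)}) =
      Module.finrank K (Submodule.span K {y : Fin (n^2-1) → K |
        ∃ (x : Fin (2*n)) (C : (Gn n).Walk x x), C.IsCycle ∧
          y = fun j => ((cycVec e C j : ℤ) : K)}) ∧
    Module.finrank K (Submodule.span K {y : Fin (n^2-1) → K |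
        ∃ (x : Fin (2*n)) (C : (Gn n).Walk x x), C.IsCycle ∧
          y = fun j => ((cycVec e C j : ℤ) : K)}) = n^2 - 2*n := by
  classical
  -- the kernel of the incidence map
  set Kr : Submodule K (Fin (n^2-1) → K) := LinearMap.ker (AM K e).mulVecLin with hKr
  have hkerdim : Module.finrank K Kr = n^2 - 2*n := finrank_ker_phi K hn e herange
  -- coerced rows
  set vK : Fin s₁ → (Fin (n^2-1) → K) := fun t j => ((v t j : ℤ) : K) with hvK
  have hvker : ∀ t, vK t ∈ Kr := by
    intro t
    obtain ⟨x, C, hcyc, _, hveq⟩ := hv1 t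
    rw [hKr, LinearMap.mem_ker]
    have : vK t = (fun j => ((avec e C.edges j : ℤ) : K)) := by
      funext j; rw [hvK]; simp only; rw [hveq]; rfl
    rw [this]
    exact phi_closed K e heinj herange C
  -- index type for fundamental cycles
  set Z := {z : Fin (n-1) × Fin (n-1) // ¬(z.1.val = 0 ∧ z.2.val = n-2)} with hZ
  have hfc := fun z : Z => fund_cycle hn e z.1 z.2
  choose xx CC hcycZ hchordZ hown hother using hfc
  set F : Z → (Fin (n^2-1) → K) := fun z j => ((cycVec e (CC z) j : ℤ) : K) with hF
  have hedgeZ : ∀ z : Z, s(va z.1, wb z.1) ∈ (Gn n).edgeSet := by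
    intro z
    have hva : (va z.1).val = 2*(z.1.1.val+1) := rfl
    have hwb : (wb z.1).val = 2*(z.1.2.val+1)+1 := rfl
    rw [SimpleGraph.mem_edgeSet]
    exact ⟨by omega, by omega, by omega⟩
  have hjzex := fun z : Z => (herange _).mp (hedgeZ z)
  choose jz hjz using hjzex
  have hFown : ∀ z : Z, F z (jz z) = -1 := by
    intro z
    rw [hF]; simp only
    rw [hown z (jz z) (hjz z)]
    simp
  have hFother : ∀ z z' : Z, z' ≠ z → F z (jz z') = 0 := by
    intro z z' hne
    rw [hF]; simp only
    rw [hother z (jz z') z'.1 z'.2 (fun h => hne (Subtype.ext h)) (hjz z')]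
    simp
  have hFind : LinearIndependent K F := by
    rw [Fintype.linearIndependent_iff]
    intro g hg z'
    have hev := congrFun hg (jz z')
    simp only [Finset.sum_apply, Pi.smul_apply, smul_eq_mul, Pi.zero_apply] at hev
    have hzero : ∀ z ∈ Finset.univ, z ≠ z' → g z * F z (jz z') = 0 := by
      intro z _ hne
      rw [hFother z z' hne.symm, mul_zero]
    rw [Finset.sum_eq_single_of_mem z' (Finset.mem_univ _) hzero, hFown] at hev
    simpa using hev
  have hcardZ : Fintype.card Z = n^2 - 2*n := by
    obtain ⟨k, rfl⟩ : ∃ k, n = k + 3 := ⟨n - 3, by omega⟩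
    have hcc : Fintype.card Z = Fintype.card {z : Fin (k+3-1) × Fin (k+3-1) //
        ¬(z.1.val = 0 ∧ z.2.val = k+3-2)} := rfl
    rw [hcc, Fintype.card_subtype_compl, Fintype.card_prod, Fintype.card_fin]
    have h1 : Fintype.card {z : Fin (k+3-1) × Fin (k+3-1) // z.1.val = 0 ∧ z.2.val = k+3-2}
        = 1 := by
      rw [Fintype.card_eq_one_iff]
      refine ⟨⟨(⟨0, by omega⟩, ⟨k+1, by omega⟩), rfl, rfl⟩, ?_⟩
      rintro ⟨⟨z1, z2⟩, hz1, hz2⟩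
      apply Subtype.ext
      exact Prod.ext (Fin.ext hz1) (Fin.ext hz2)
    rw [h1]
    have h3 : k+3-1 = k+2 := rfl
    rw [h3]
    have h4 : (k+2)*(k+2) = k*k+4*k+4 := by ring
    have h2 : (k+3)^2 = k*k+6*k+9 := by ring
    omega
  -- claim 2
  set W := Submodule.span K {y : Fin (n^2-1) → K |
      ∃ (x : Fin (2*n)) (C : (Gn n).Walk x x), C.IsCycle ∧
        y = fun j => ((cycVec e C j : ℤ) : K)} with hWdef
  have hWle : W ≤ Kr := by
    rw [hWdef, Submodule.span_le]
    rintro y ⟨x, C, hcyc, rfl⟩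
    rw [SetLike.mem_coe, hKr, LinearMap.mem_ker]
    exact phi_closed K e heinj herange C
  have hFW : ∀ z : Z, F z ∈ W := by
    intro z
    exact Submodule.subset_span ⟨xx z, CC z, hcycZ z, rfl⟩
  have hspanFW : Submodule.span K (Set.range F) ≤ W := by
    rw [Submodule.span_le]
    rintro y ⟨z, rfl⟩
    exact hFW z
  have hfrF : Module.finrank K (Submodule.span K (Set.range F)) = n^2 - 2*n := by
    rw [finrank_span_eq_card hFind, hcardZ]
  have hWrank : Module.finrank K W = n^2 - 2*n := by
    apply le_antisymm
    · rw [← hkerdim]; exact Submodule.finrank_mono hWle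
    · rw [← hfrF]; exact Submodule.finrank_mono hspanFW
  refine ⟨?_, hWrank⟩
  -- claim 1
  set R := Submodule.span K (Set.range vK) with hRdef
  have hRle : R ≤ Kr := by
    rw [hRdef, Submodule.span_le]
    rintro y ⟨t, rfl⟩
    exact hvker t
  have hFR : ∀ z : Z, F z ∈ R := by
    intro z
    obtain ⟨t, ht⟩ := hv2 (xx z) (CC z) (hcycZ z) (hchordZ z)
    rcases ht with ht | ht
    · have : F z = vK t := by
        funext j; rw [hF, hvK]; simp only; rw [ht]
      rw [this]
      exact Submodule.subset_span ⟨t, rfl⟩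
    · have : F z = -(vK t) := by
        funext j; rw [hF, hvK]; simp only [Pi.neg_apply]; rw [ht]
        simp
      rw [this]
      exact Submodule.neg_mem _ (Submodule.subset_span ⟨t, rfl⟩)
  have hspanFR : Submodule.span K (Set.range F) ≤ R := by
    rw [Submodule.span_le]
    rintro y ⟨z, rfl⟩
    exact hFR z
  have hReq : R = Kr := by
    apply Submodule.eq_of_le_of_finrank_le hRle
    rw [hkerdim, ← hfrF]
    exact Submodule.finrank_mono hspanFR
  -- the projection
  set S : Set (Fin (n^2-1)) := {j | a + edgeVec (e j) ∈ H} with hSdef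
  set pr : (Fin (n^2-1) → K) →ₗ[K] (Fin (n^2-1) → K) :=
    { toFun := fun u j => if j ∈ S then u j else 0
      map_add' := by
        intro u w; funext j
        by_cases hj : j ∈ S <;> simp [hj]
      map_smul' := by
        intro c u; funext j
        by_cases hj : j ∈ S <;> simp [hj] } with hpr
  set M' : Matrix (Fin s₁) (Fin (n^2-1)) K :=
    Matrix.of (fun t j => if j ∈ S then vK t j else 0) with hM'
  -- identify the column span with the range of M'.mulVecLin
  have hcol : Submodule.span K {y : Fin s₁ → K | ∃ j : Fin (n^2-1),
      a + edgeVec (e j) ∈ H ∧ y = fun t => ((v t j : ℤ) : K)}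
      = LinearMap.range M'.mulVecLin := by
    rw [Matrix.range_mulVecLin]
    apply le_antisymm
    · rw [Submodule.span_le]
      rintro y ⟨j, hjS, rfl⟩
      apply Submodule.subset_span
      refine ⟨j, ?_⟩
      funext t
      show (if j ∈ S then vK t j else 0) = ((v t j : ℤ) : K)
      simp only [if_pos (show j ∈ S from hjS), hvK]
    · rw [Submodule.span_le]
      rintro y ⟨j, rfl⟩
      by_cases hjS : j ∈ S
      · apply Submodule.subset_span
        refine ⟨j, hjS, ?_⟩
        funext t
        show (if j ∈ S then vK t j else 0) = ((v t j : ℤ) : K)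
        simp only [if_pos hjS, hvK]
      · have : (M'ᵀ j) = 0 := by
          funext t
          show (if j ∈ S then vK t j else 0) = 0
          rw [if_neg hjS]
        rw [show M'.col j = 0 from this]
        exact Submodule.zero_mem _
  -- row space of M' is pr '' R
  have hrows : Submodule.span K (Set.range M') = Submodule.map pr R := by
    have h1 : Set.range M' = pr '' (Set.range vK) := by
      rw [← Set.range_comp]
      rfl
    rw [h1, hRdef, Submodule.span_image]
  -- no cycle consists solely of edges outside S
  have hncc : ∀ (x : Fin (2*n)) (C : (Gn n).Walk x x), C.IsCycle →
      ∃ j, e j ∈ C.edges ∧ j ∈ S := by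
    push_neg at hnc
    intro x C hcyc
    obtain ⟨j, hj1, hj2⟩ := hnc x C hcyc
    exact ⟨j, hj1, hj2⟩
  -- pr is injective on Kr
  have hkerpr : LinearMap.ker (pr.comp Kr.subtype) = ⊥ := by
    rw [LinearMap.ker_eq_bot']
    intro x hx
    have hx0 : pr (x : Fin (n^2-1) → K) = 0 := hx
    have hxS : ∀ j ∈ S, (x : Fin (n^2-1) → K) j = 0 := by
      intro j hjS
      have hj : (if j ∈ S then (x : Fin (n^2-1) → K) j else 0) = 0 := congrFun hx0 j
      rwa [if_pos hjS] at hj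
    have hker0 : (AM K e).mulVecLin (x : Fin (n^2-1) → K) = 0 := by
      exact LinearMap.mem_ker.mp x.2
    exact Subtype.ext (ker_vanish (K := K) hn e heinj herange S hncc _ hker0 hxS)
  have hrn := LinearMap.finrank_range_add_finrank_ker (pr.comp Kr.subtype)
  rw [hkerpr, finrank_bot, add_zero] at hrn
  have hmap : LinearMap.range (pr.comp Kr.subtype) = Submodule.map pr Kr := by
    rw [LinearMap.range_comp, Submodule.range_subtype]
  have hmaprank : Module.finrank K (Submodule.map pr Kr) = n^2 - 2*n := by
    rw [← hmap, hrn, hkerdim]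
  rw [hcol]
  have hr3 : M'ᵀ.rank = Module.finrank K
      (LinearMap.range (Matrix.mulVecLin M'ᵀ)) := rfl
  rw [Matrix.range_mulVecLin, show Set.range M'ᵀ.col = Set.range M' from rfl, hrows, hReq, hmaprank] at hr3
  have hLHS : Module.finrank K (LinearMap.range M'.mulVecLin) = n^2 - 2*n := by
    have hr1 : M'.rank = Module.finrank K (LinearMap.range M'.mulVecLin) := rfl
    rw [← hr1, ← Matrix.rank_transpose, hr3]
  rw [hLHS, hWrank]
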